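/- arXiv:2605.17670 — 4 statements merged into one kernel-verified Lean document; each statement's English description precedes it below -/
import Mathlib

section
/- Let R be an integral domain over a field k of characteristic zero and δ a locally nilpotent derivation of R. Then the kernel of δ is factorially closed: if f, g ∈ R are nonzero and fg ∈ ker δ, then f ∈ ker δ and g ∈ ker δ. -/
/-!
If `δ^[m] f ≠ 0 = δ^[m+1] f` and `δ^[p] g ≠ 0 = δ^[p+1] g` (local nilpotency provides such `m, p`),
the general Leibniz rule collapses `δ^[m+p] (f * g)` to the single term
`(m+p).choose m • (δ^[m] f * δ^[p] g)`, which is nonzero in a domain of characteristic zero.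
As `δ (f * g) = 0` kills every iterate of positive order, `m + p = 0`, i.e. `δ f = δ g = 0`.
-/

/-- A locally nilpotent derivation: every element is annihilated by some iterate. -/
def IsLND {k R : Type*} [CommRing k] [CommRing R] [Algebra k R]
    (δ : Derivation k R R) : Prop :=
  ∀ g : R, ∃ n : ℕ, ((δ.toLinearMap : Module.End k R) ^ n) g = 0

open Finset

theorem Function.exists_iterate_ne_zero_and_iterate_succ_eq_zero {M : Type*} [Zero M]
    (F : M → M) {x : M} (hx : x ≠ 0) {n : ℕ} (hn : F^[n] x = 0) :
    ∃ m, F^[m] x ≠ 0 ∧ F^[m + 1] x = 0 := by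
  induction n with
  | zero => exact absurd hn hx
  | succ n ih =>
    by_cases h : F^[n] x = 0
    · exact ih h
    · exact ⟨n, h, hn⟩

namespace Derivation

variable {R A : Type*} [CommSemiring R] [CommSemiring A] [Algebra R A] (D : Derivation R A A)

theorem iterate_apply_mul (n : ℕ) (a b : A) :
    D^[n] (a * b) = ∑ ij ∈ antidiagonal n, n.choose ij.1 • (D^[ij.1] a * D^[ij.2] b) := by
  induction n with
  | zero => simp
  | succ n ih =>
    rw [sum_antidiagonal_choose_succ_nsmul (M := A) (fun i j => D^[i] a * D^[j] b) n]
    simp only [Function.iterate_succ_apply', ih, map_sum, map_nsmul, leibniz, smul_eq_mul,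
      smul_add, sum_add_distrib]
    congr 1
    refine sum_congr rfl fun ⟨i, j⟩ hij ↦ ?_
    rw [n.choose_symm_of_eq_add (HasAntidiagonal.mem_antidiagonal.1 hij).symm]
    ring

theorem iterate_add_apply_mul_of_iterate_succ_eq_zero {m p : ℕ} {a b : A}
    (ha : D^[m + 1] a = 0) (hb : D^[p + 1] b = 0) :
    D^[m + p] (a * b) = (m + p).choose m • (D^[m] a * D^[p] b) := by
  have vanish : ∀ i j, m < i ∨ p < j → D^[i] a * D^[j] b = 0 := by
    rintro i j (hi | hj)
    · rw [← Nat.sub_add_cancel hi, Function.iterate_add_apply, ha, iterate_map_zero, zero_mul]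
    · rw [← Nat.sub_add_cancel hj, Function.iterate_add_apply, hb, iterate_map_zero, mul_zero]
  rw [iterate_apply_mul, sum_eq_single (m, p)]
  · rintro ⟨i, j⟩ hij hne
    rw [HasAntidiagonal.mem_antidiagonal] at hij
    rw [vanish i j (by grind), smul_zero]
  · simp

theorem iterate_add_apply_mul_ne_zero [IsDomain A] [CharZero A] {m p : ℕ} {a b : A}
    (ha : D^[m] a ≠ 0) (ha' : D^[m + 1] a = 0) (hb : D^[p] b ≠ 0) (hb' : D^[p + 1] b = 0) :
    D^[m + p] (a * b) ≠ 0 := by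
  rw [D.iterate_add_apply_mul_of_iterate_succ_eq_zero ha' hb', nsmul_eq_mul]
  exact mul_ne_zero (Nat.cast_ne_zero.2 (Nat.choose_pos (Nat.le_add_right m p)).ne')
    (mul_ne_zero ha hb)

end Derivation

/-- The kernel of a locally nilpotent derivation of a domain over a field of
characteristic zero is factorially closed. -/
theorem stmt1 {k R : Type*} [Field k] [CharZero k] [CommRing R] [IsDomain R] [Algebra k R]
    (δ : Derivation k R R) (hδ : IsLND δ)
    (f g : R) (hf : f ≠ 0) (hg : g ≠ 0) (h : δ (f * g) = 0) :
    δ f = 0 ∧ δ g = 0 := by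
  have : CharZero R := charZero_of_injective_algebraMap (algebraMap k R).injective
  have exact_order : ∀ x : R, x ≠ 0 → ∃ m, δ^[m] x ≠ 0 ∧ δ^[m + 1] x = 0 := fun x hx ↦ by
    obtain ⟨n, hn⟩ := hδ x
    rw [Module.End.pow_apply] at hn
    exact Function.exists_iterate_ne_zero_and_iterate_succ_eq_zero δ hx hn
  obtain ⟨m, hfm, hfm'⟩ := exact_order f hf
  obtain ⟨p, hgp, hgp'⟩ := exact_order g hg
  have hfg := δ.iterate_add_apply_mul_ne_zero hfm hfm' hgp hgp'
  obtain ⟨rfl, rfl⟩ : m = 0 ∧ p = 0 := by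
    by_contra hmp
    obtain ⟨n, hn⟩ : ∃ n, m + p = n + 1 := Nat.exists_eq_add_one.2 (by omega)
    rw [hn, Function.iterate_succ_apply, h, iterate_map_zero] at hfg
    exact hfg rfl
  exact ⟨hfm', hgp'⟩
end

section
/- Let R be an algebra graded by ℤ^k equipped with a total translation-invariant order, and let δ be a locally nilpotent derivation of R with homogeneous decomposition δ = δ₁ + ⋯ + δ_p where deg δ₁ < ⋯ < deg δ_p and all δ_i are nonzero homogeneous derivations. Then δ₁ and δ_p are locally nilpotent. -/
/-- A derivation is homogeneous of degree `d` with respect to a grading `𝒜` if it maps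
each graded piece `𝒜 g` into `𝒜 (g + d)`. -/
def IsHomogeneousDer {k R G : Type*} [CommRing k] [CommRing R] [Algebra k R]
    [AddCommGroup G] (𝒜 : G → Submodule k R) (δ : Derivation k R R) (d : G) : Prop :=
  ∀ (g : G), ∀ r ∈ 𝒜 g, δ r ∈ 𝒜 (g + d)


/-!
Filter `R` by the submodules `R_{≥h}` spanned by the homogeneous components of degree at least
`h`. Every `δᵢ` maps `R_{≥h}` into `R_{≥h + deg δ₁}`, and since the order is translation
invariant and the degrees are distinct, the degree `h + deg δ₁` component of `δ x` is `δ₁` applied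
to the degree `h` component of `x`. Iterating, the degree `h + n • deg δ₁` component of `δⁿ r` is
`δ₁ⁿ r` for `r` homogeneous of degree `h`, so `δⁿ r = 0` forces `δ₁ⁿ r = 0`. The elements killed
by a power of `δ₁` form a submodule (the generalized `0`-eigenspace), so this spreads from
homogeneous elements to all of `R`. Reversing the order gives the claim for `δ_p`.
-/

open DirectSum Module

section Filtration

variable {k M G : Type*} [CommRing k] [AddCommGroup M] [Module k M] [Preorder G]

def gradedAtLeast (𝒜 : G → Submodule k M) (h : G) : Submodule k M :=
  ⨆ g : Set.Ici h, 𝒜 g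

lemma mem_gradedAtLeast_of_mem {𝒜 : G → Submodule k M} {h g : G} {x : M} (hhg : h ≤ g)
    (hx : x ∈ 𝒜 g) : x ∈ gradedAtLeast 𝒜 h :=
  Submodule.mem_iSup_of_mem ⟨g, hhg⟩ hx

end Filtration

namespace Module.End

variable {k M : Type*} [CommRing k] [AddCommGroup M] [Module k M]

def IsLocallyNilpotent (f : End k M) : Prop :=
  ∀ x, ∃ n : ℕ, (f ^ n) x = 0

lemma IsLocallyNilpotent.of_forall_mem {G : Type*} [DecidableEq G] (𝒜 : G → Submodule k M)
    [Decomposition 𝒜] {f : End k M} (hf : ∀ g, ∀ x ∈ 𝒜 g, ∃ n : ℕ, (f ^ n) x = 0) :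
    IsLocallyNilpotent f := by
  have hle : ⨆ g, 𝒜 g ≤ f.maxGenEigenspace 0 := iSup_le fun g x hx => by simpa using hf g x hx
  rw [(Decomposition.isInternal 𝒜).submodule_iSup_eq_top] at hle
  exact fun x => by simpa using hle (Submodule.mem_top (x := x))

end Module.End

section LowestComponent

variable {k M G ι : Type*} [CommRing k] [AddCommGroup M] [Module k M]
  [AddCommMonoid G] [PartialOrder G] [IsOrderedCancelAddMonoid G] [Fintype ι]
  {𝒜 : G → Submodule k M} {fs : ι → End k M} {ds : ι → G} {i₀ : ι}

lemma sum_apply_mem_gradedAtLeast (hhom : ∀ i g, ∀ x ∈ 𝒜 g, fs i x ∈ 𝒜 (g + ds i))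
    (hlow : ∀ i ≠ i₀, ds i₀ < ds i) {h : G} {x : M} (hx : x ∈ gradedAtLeast 𝒜 h) :
    (∑ i, fs i) x ∈ gradedAtLeast 𝒜 (h + ds i₀) := by
  refine Submodule.iSup_induction _ (motive := fun x => (∑ i, fs i) x ∈ _) hx ?_ (by simp)
    (fun x y hx hy => by simpa only [map_add] using add_mem hx hy)
  rintro ⟨g, hhg⟩ x hx
  rw [LinearMap.sum_apply]
  refine Submodule.sum_mem _ fun i _ => mem_gradedAtLeast_of_mem ?_ (hhom i g x hx)
  obtain rfl | hi := eq_or_ne i i₀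
  · exact add_le_add_left hhg _
  · exact add_le_add hhg (hlow i hi).le

lemma pow_sum_apply_mem_gradedAtLeast (hhom : ∀ i g, ∀ x ∈ 𝒜 g, fs i x ∈ 𝒜 (g + ds i))
    (hlow : ∀ i ≠ i₀, ds i₀ < ds i) (n : ℕ) {h : G} {x : M} (hx : x ∈ gradedAtLeast 𝒜 h) :
    ((∑ i, fs i) ^ n) x ∈ gradedAtLeast 𝒜 (h + n • ds i₀) := by
  induction n with
  | zero => simpa using hx
  | succ n ih =>
    rw [pow_succ', End.mul_apply, succ_nsmul, ← add_assoc]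
    exact sum_apply_mem_gradedAtLeast hhom hlow ih

variable [DecidableEq G] [Decomposition 𝒜]

lemma decompose_sum_apply (hhom : ∀ i g, ∀ x ∈ 𝒜 g, fs i x ∈ 𝒜 (g + ds i))
    (hlow : ∀ i ≠ i₀, ds i₀ < ds i) {h : G} {x : M} (hx : x ∈ gradedAtLeast 𝒜 h) :
    (decompose 𝒜 ((∑ i, fs i) x) (h + ds i₀) : M) = fs i₀ (decompose 𝒜 x h) := by
  refine Submodule.iSup_induction _ (motive := fun x =>
    (decompose 𝒜 ((∑ i, fs i) x) (h + ds i₀) : M) = fs i₀ (decompose 𝒜 x h)) hx ?_ (by simp)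
    (fun x y hx hy => by
      simp only [map_add, decompose_add, DirectSum.add_apply, Submodule.coe_add, hx, hy])
  rintro ⟨g, hhg⟩ x (hxg : x ∈ 𝒜 g)
  have hdeg : ∀ i, g + ds i = h + ds i₀ → g = h ∧ i = i₀ := fun i heq => by
    obtain rfl | hi := eq_or_ne i i₀
    · exact ⟨add_right_cancel heq, rfl⟩
    · obtain ⟨rfl, hds⟩ := (add_eq_add_iff_eq_and_eq hhg (hlow i hi).le).mp heq.symm
      exact absurd hds (hlow i hi).ne
  have hvanish : ∀ i, ¬(g = h ∧ i = i₀) → (decompose 𝒜 (fs i x) (h + ds i₀) : M) = 0 :=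
    fun i hi => decompose_of_mem_ne 𝒜 (hhom i g x hxg) (mt (hdeg i) hi)
  rw [LinearMap.sum_apply, decompose_sum, DFinsupp.finsetSum_apply, Submodule.coe_sum]
  obtain rfl | hgh := eq_or_ne g h
  · rw [Finset.sum_eq_single i₀ (fun i _ hi => hvanish i (by simp [hi])) (by simp),
      decompose_of_mem_same 𝒜 (hhom i₀ g x hxg), decompose_of_mem_same 𝒜 hxg]
  · rw [Finset.sum_eq_zero fun i _ => hvanish i (by simp [hgh]), decompose_of_mem_ne 𝒜 hxg hgh,
      map_zero]

lemma decompose_pow_sum_apply (hhom : ∀ i g, ∀ x ∈ 𝒜 g, fs i x ∈ 𝒜 (g + ds i))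
    (hlow : ∀ i ≠ i₀, ds i₀ < ds i) (n : ℕ) {h : G} {x : M} (hx : x ∈ gradedAtLeast 𝒜 h) :
    (decompose 𝒜 (((∑ i, fs i) ^ n) x) (h + n • ds i₀) : M) = (fs i₀ ^ n) (decompose 𝒜 x h) := by
  induction n with
  | zero => rw [zero_nsmul, add_zero, pow_zero, pow_zero, End.one_apply, End.one_apply]
  | succ n ih =>
    rw [pow_succ', End.mul_apply, succ_nsmul, ← add_assoc,
      decompose_sum_apply hhom hlow (pow_sum_apply_mem_gradedAtLeast hhom hlow n hx), ih,
      pow_succ', End.mul_apply]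

theorem Module.End.IsLocallyNilpotent.of_sum_of_lowest
    (hhom : ∀ i g, ∀ x ∈ 𝒜 g, fs i x ∈ 𝒜 (g + ds i)) (hlow : ∀ i ≠ i₀, ds i₀ < ds i)
    (hf : (∑ i, fs i).IsLocallyNilpotent) : (fs i₀).IsLocallyNilpotent :=
  .of_forall_mem 𝒜 fun g x hx => (hf x).imp fun n hn => by
    simpa [hn, decompose_of_mem_same 𝒜 hx] using
      (decompose_pow_sum_apply hhom hlow n (mem_gradedAtLeast_of_mem le_rfl hx)).symm

end LowestComponent

lemma Derivation.toLinearMap_sum {k A M ι : Type*} [CommSemiring k] [CommSemiring A]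
    [AddCommMonoid M] [Algebra k A] [Module A M] [Module k M] (s : Finset ι)
    (δs : ι → Derivation k A M) : (∑ i ∈ s, δs i).toLinearMap = ∑ i ∈ s, (δs i).toLinearMap :=
  map_sum (⟨⟨Derivation.toLinearMap, rfl⟩, fun _ _ => rfl⟩ : Derivation k A M →+ A →ₗ[k] M) _ _

section Derivation

variable {k R G ι : Type*} [CommRing k] [CommRing R] [Algebra k R]
  [AddCommGroup G] [PartialOrder G] [IsOrderedAddMonoid G] [DecidableEq G]
  {𝒜 : G → Submodule k R} [Decomposition 𝒜] [Fintype ι] {δs : ι → Derivation k R R}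
  {ds : ι → G} {i₀ : ι}

lemma IsLND.of_sum_of_lowest (hhom : ∀ i, IsHomogeneousDer 𝒜 (δs i) (ds i))
    (hlow : ∀ i ≠ i₀, ds i₀ < ds i) (hδ : IsLND (∑ i, δs i)) : IsLND (δs i₀) :=
  Module.End.IsLocallyNilpotent.of_sum_of_lowest (𝒜 := 𝒜) (fs := fun i => (δs i).toLinearMap)
    hhom hlow (by rwa [← Derivation.toLinearMap_sum])

lemma IsLND.of_sum_of_highest (hhom : ∀ i, IsHomogeneousDer 𝒜 (δs i) (ds i))
    (hhigh : ∀ i ≠ i₀, ds i < ds i₀) (hδ : IsLND (∑ i, δs i)) : IsLND (δs i₀) :=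
  letI : Decomposition (fun g : Gᵒᵈ => 𝒜 (OrderDual.ofDual g)) := ‹Decomposition 𝒜›
  IsLND.of_sum_of_lowest (𝒜 := fun g : Gᵒᵈ => 𝒜 (OrderDual.ofDual g))
    (ds := OrderDual.toDual ∘ ds) hhom hhigh hδ

end Derivation

/-- Let `R` be a finitely generated commutative algebra over a field of characteristic
zero, graded by an ordered group `G ≅ ℤ^k` (total translation-invariant order).  If a
locally nilpotent derivation `δ` decomposes as `δ = δ₁ + ⋯ + δ_p` with nonzero
homogeneous summands of strictly increasing degrees, then the lowest and the highest
components `δ₁` and `δ_p` are locally nilpotent. -/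
theorem stmt6 {k R : Type*} (m : ℕ) [Field k] [CommRing R] [Algebra k R]
    [inst : LinearOrder (Fin m → ℤ)]
    (hord : ∀ a b c : Fin m → ℤ, a ≤ b → a + c ≤ b + c)
    (𝒜 : (Fin m → ℤ) → Submodule k R) [GradedAlgebra 𝒜]
    (p : ℕ) (hp : 0 < p)
    (δs : Fin p → Derivation k R R) (ds : Fin p → (Fin m → ℤ))
    (hmono : StrictMono ds)
    (hhom : ∀ i, IsHomogeneousDer 𝒜 (δs i) (ds i))
    (δ : Derivation k R R) (hsum : δ = ∑ i, δs i)
    (hδ : IsLND δ) :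
    IsLND (δs ⟨0, hp⟩) ∧ IsLND (δs ⟨p - 1, by omega⟩) := by
  have : IsOrderedAddMonoid (Fin m → ℤ) := { add_le_add_left := fun a b h c => hord a b c h }
  subst hsum
  refine ⟨hδ.of_sum_of_lowest hhom fun i hi => hmono ?_,
    hδ.of_sum_of_highest hhom fun i hi => hmono ?_⟩
  all_goals simp only [ne_eq, Fin.ext_iff, Fin.lt_def] at hi ⊢; omega
end

section
/- Let k be an algebraically closed field of characteristic zero containing a square root i of −1, and let R = k[x,y,z]/(x² + y² + z^γ) for an integer γ ≥ 2. Then the formulas δ₀(x) = iγz^{γ−1}, δ₀(y) = γz^{γ−1}, δ₀(z) = −2(ix + y) define a well-defined derivation of R, and δ₀ is locally nilpotent. -/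
/-!
The formulas define a derivation of `k[x,y,z]` that kills `f = x² + y² + z^γ`, so it preserves
`(f)` and descends to `R`. By the Leibniz rule, the elements of `R` killed by some iterate of a
derivation form a subalgebra, so local nilpotency only has to be checked on `x`, `y`, `z`.
Since `i² = -1`, the linear form `u = ix + y` is a constant of `δ₀`; then `δ₀ z = -2u`, and
`δ₀ x`, `δ₀ y` are multiples of `z^{γ-1}`.
-/

set_option synthInstance.maxHeartbeats 400000
open MvPolynomial

namespace Derivation

variable {k R : Type*} [CommRing k] [CommRing R] [Algebra k R] (δ : Derivation k R R)

theorem map_mem_span_singleton {f : R} (hf : δ f ∈ Ideal.span {f}) {p : R}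
    (hp : p ∈ Ideal.span {f}) : δ p ∈ Ideal.span {f} := by
  obtain ⟨a, rfl⟩ := Ideal.mem_span_singleton'.mp hp
  rw [δ.leibniz, smul_eq_mul, smul_eq_mul]
  exact Ideal.add_mem _ (Ideal.mul_mem_left _ _ hf)
    (Ideal.mul_mem_right _ _ (Ideal.mem_span_singleton_self f))

theorem iterate_eq_zero_of_le {m n : ℕ} {a : R} (ha : (⇑δ)^[m] a = 0) (hmn : m ≤ n) :
    (⇑δ)^[n] a = 0 := by
  obtain ⟨c, rfl⟩ := Nat.exists_eq_add_of_le hmn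
  rw [add_comm, Function.iterate_add_apply, ha, iterate_map_zero]

theorem iterate_mul_eq_zero {m n : ℕ} {a b : R} (ha : (⇑δ)^[m] a = 0)
    (hb : (⇑δ)^[n] b = 0) : (⇑δ)^[m + n] (a * b) = 0 := by
  induction h : m + n generalizing m n a b with
  | zero =>
    obtain ⟨rfl, -⟩ : m = 0 ∧ n = 0 := by omega
    simp_all
  | succ s ih =>
    rcases m with _ | m
    · simp_all
    rcases n with _ | n
    · simp_all
    have hδa : (⇑δ)^[m] (δ a) = 0 := ha
    have hδb : (⇑δ)^[n] (δ b) = 0 := hb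
    rw [Function.iterate_succ_apply, leibniz, smul_eq_mul, smul_eq_mul, iterate_map_add,
      ih ha hδb (by omega), ih hb hδa (by omega), add_zero]

def nilSubalgebra : Subalgebra k R where
  carrier := {a | ∃ n, (⇑δ)^[n] a = 0}
  mul_mem' := fun ⟨m, ha⟩ ⟨n, hb⟩ => ⟨m + n, δ.iterate_mul_eq_zero ha hb⟩
  add_mem' := fun {a b} ⟨m, ha⟩ ⟨n, hb⟩ => ⟨max m n, by
    rw [iterate_map_add, δ.iterate_eq_zero_of_le ha (le_max_left m n),
      δ.iterate_eq_zero_of_le hb (le_max_right m n), add_zero]⟩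
  algebraMap_mem' c := ⟨1, δ.map_algebraMap c⟩

variable {δ}

theorem mem_nilSubalgebra_of_apply_mem {a : R} (h : δ a ∈ δ.nilSubalgebra) :
    a ∈ δ.nilSubalgebra :=
  let ⟨n, hn⟩ := h
  ⟨n + 1, hn⟩

theorem mem_nilSubalgebra_of_apply_eq_zero {a : R} (h : δ a = 0) : a ∈ δ.nilSubalgebra :=
  ⟨1, h⟩

theorem isLND_of_surjective {σ : Type*} {φ : MvPolynomial σ k →ₐ[k] R}
    (hφ : Function.Surjective φ) (h : ∀ j, φ (X j) ∈ δ.nilSubalgebra) : IsLND δ := by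
  have htop : δ.nilSubalgebra.comap φ = ⊤ := by
    rw [eq_top_iff, ← adjoin_range_X, Algebra.adjoin_le_iff]
    rintro _ ⟨j, rfl⟩
    exact h j
  intro g
  obtain ⟨p, rfl⟩ := hφ g
  obtain ⟨n, hn⟩ : φ p ∈ δ.nilSubalgebra := by
    change p ∈ δ.nilSubalgebra.comap φ
    exact htop ▸ Algebra.mem_top
  exact ⟨n, by rw [Module.End.pow_apply]; exact hn⟩

end Derivation

section Surface

variable {k : Type*} [CommRing k] (i : k) (γ : ℕ)

noncomputable def surfaceDerivation :
    Derivation k (MvPolynomial (Fin 3) k) (MvPolynomial (Fin 3) k) :=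
  mkDerivation k ![C i * (γ : MvPolynomial (Fin 3) k) * X 2 ^ (γ - 1),
    (γ : MvPolynomial (Fin 3) k) * X 2 ^ (γ - 1), -2 * (C i * X 0 + X 1)]

@[simp]
theorem surfaceDerivation_X_zero :
    surfaceDerivation i γ (X 0) = C i * (γ : MvPolynomial (Fin 3) k) * X 2 ^ (γ - 1) :=
  mkDerivation_X _ _ _

@[simp]
theorem surfaceDerivation_X_one :
    surfaceDerivation i γ (X 1) = (γ : MvPolynomial (Fin 3) k) * X 2 ^ (γ - 1) :=
  mkDerivation_X _ _ _

@[simp]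
theorem surfaceDerivation_X_two :
    surfaceDerivation i γ (X 2) = -2 * (C i * X 0 + X 1) :=
  mkDerivation_X _ _ _

theorem surfaceDerivation_surface :
    surfaceDerivation i γ (X 0 ^ 2 + X 1 ^ 2 + X 2 ^ γ) = 0 := by
  simp only [map_add, Derivation.leibniz_pow, surfaceDerivation_X_zero, surfaceDerivation_X_one,
    surfaceDerivation_X_two, smul_eq_mul, nsmul_eq_mul]
  ring

theorem surfaceDerivation_C_mul_X_zero_add_X_one (hi : i ^ 2 = -1) :
    surfaceDerivation i γ (C i * X 0 + X 1) = 0 := by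
  rw [map_add, ← smul_eq_C_mul, Derivation.map_smul, smul_eq_C_mul, surfaceDerivation_X_zero,
    surfaceDerivation_X_one]
  have hCi : (C i : MvPolynomial (Fin 3) k) ^ 2 = -1 := by rw [← map_pow, hi, map_neg, map_one]
  linear_combination ((γ : MvPolynomial (Fin 3) k) * X 2 ^ (γ - 1)) * hCi

variable (k) in
noncomputable def surfaceIdeal : Ideal (MvPolynomial (Fin 3) k) :=
  Ideal.span {X 0 ^ 2 + X 1 ^ 2 + X 2 ^ γ}

variable {γ} in
theorem mkₐ_surfaceDerivation_eq_zero {p : MvPolynomial (Fin 3) k}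
    (hp : Ideal.Quotient.mkₐ k (surfaceIdeal k γ) p = 0) :
    Ideal.Quotient.mkₐ k (surfaceIdeal k γ) (surfaceDerivation i γ p) = 0 := by
  rw [Ideal.Quotient.mkₐ_eq_mk, Ideal.Quotient.eq_zero_iff_mem] at hp ⊢
  exact Derivation.map_mem_span_singleton _
    (by rw [surfaceDerivation_surface]; exact zero_mem _) hp

noncomputable def quotientSurfaceDerivation :
    Derivation k (MvPolynomial (Fin 3) k ⧸ surfaceIdeal k γ)
      (MvPolynomial (Fin 3) k ⧸ surfaceIdeal k γ) :=
  Derivation.liftOfSurjective (Ideal.Quotient.mkₐ_surjective k _)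
    fun _ => mkₐ_surfaceDerivation_eq_zero i

theorem quotientSurfaceDerivation_mk (p : MvPolynomial (Fin 3) k) :
    quotientSurfaceDerivation i γ (Ideal.Quotient.mk _ p)
      = Ideal.Quotient.mk _ (surfaceDerivation i γ p) :=
  Derivation.liftOfSurjective_apply _ (fun _ => mkₐ_surfaceDerivation_eq_zero i) p

theorem isLND_quotientSurfaceDerivation (hi : i ^ 2 = -1) :
    IsLND (quotientSurfaceDerivation i γ) := by
  set N := (quotientSurfaceDerivation i γ).nilSubalgebra
  have hu : Ideal.Quotient.mk _ (C i * X 0 + X 1) ∈ N :=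
    Derivation.mem_nilSubalgebra_of_apply_eq_zero (by
      rw [quotientSurfaceDerivation_mk, surfaceDerivation_C_mul_X_zero_add_X_one i γ hi, map_zero])
  have hz : Ideal.Quotient.mk _ (X 2) ∈ N := Derivation.mem_nilSubalgebra_of_apply_mem (by
    rw [quotientSurfaceDerivation_mk, surfaceDerivation_X_two, map_mul, map_neg, map_ofNat]
    exact N.mul_mem (N.neg_mem (ofNat_mem N 2)) hu)
  have hzpow : Ideal.Quotient.mk _ ((γ : MvPolynomial (Fin 3) k) * X 2 ^ (γ - 1)) ∈ N := by
    rw [map_mul, map_natCast, map_pow]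
    exact N.mul_mem (N.natCast_mem γ) (N.pow_mem hz _)
  have hx : Ideal.Quotient.mk _ (X 0) ∈ N := Derivation.mem_nilSubalgebra_of_apply_mem (by
    rw [quotientSurfaceDerivation_mk, surfaceDerivation_X_zero, mul_assoc, map_mul,
      ← algebraMap_eq, Ideal.Quotient.mk_algebraMap]
    exact N.mul_mem (N.algebraMap_mem i) hzpow)
  have hy : Ideal.Quotient.mk _ (X 1) ∈ N := Derivation.mem_nilSubalgebra_of_apply_mem (by
    rw [quotientSurfaceDerivation_mk, surfaceDerivation_X_one]
    exact hzpow)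
  refine Derivation.isLND_of_surjective (Ideal.Quotient.mkₐ_surjective k _) fun j => ?_
  rw [Ideal.Quotient.mkₐ_eq_mk]
  fin_cases j
  exacts [hx, hy, hz]

end Surface

theorem stmt10_general {k : Type*} [Field k]
    (i : k) (hi : i ^ 2 = -1) (γ : ℕ)
    (I : Ideal (MvPolynomial (Fin 3) k))
    (hI : I = Ideal.span {X 0 ^ 2 + X 1 ^ 2 + X 2 ^ γ}) :
    ∃ δ : Derivation k (MvPolynomial (Fin 3) k ⧸ I) (MvPolynomial (Fin 3) k ⧸ I),
      δ (Ideal.Quotient.mk I (X 0))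
          = Ideal.Quotient.mk I (C i * (γ : MvPolynomial (Fin 3) k) * X 2 ^ (γ - 1)) ∧
      δ (Ideal.Quotient.mk I (X 1))
          = Ideal.Quotient.mk I ((γ : MvPolynomial (Fin 3) k) * X 2 ^ (γ - 1)) ∧
      δ (Ideal.Quotient.mk I (X 2))
          = Ideal.Quotient.mk I (-(2 : MvPolynomial (Fin 3) k) * (C i * X 0 + X 1)) ∧
      IsLND δ := by
  obtain rfl : I = surfaceIdeal k γ := hI
  refine ⟨quotientSurfaceDerivation i γ, ?_, ?_, ?_, isLND_quotientSurfaceDerivation i γ hi⟩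
  · rw [quotientSurfaceDerivation_mk, surfaceDerivation_X_zero]
  · rw [quotientSurfaceDerivation_mk, surfaceDerivation_X_one]
  · rw [quotientSurfaceDerivation_mk, surfaceDerivation_X_two]

/-- On `R = k[x,y,z]/(x² + y² + z^γ)` the formulas `δ₀ x = iγ z^{γ-1}`,
`δ₀ y = γ z^{γ-1}`, `δ₀ z = -2(ix + y)` define a well-defined derivation of `R`,
and this derivation is locally nilpotent. -/
theorem stmt10 {k : Type*} [Field k] [IsAlgClosed k] [CharZero k]
    (i : k) (hi : i ^ 2 = -1) (γ : ℕ) (hγ : 2 ≤ γ)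
    (I : Ideal (MvPolynomial (Fin 3) k))
    (hI : I = Ideal.span {X 0 ^ 2 + X 1 ^ 2 + X 2 ^ γ}) :
    ∃ δ : Derivation k (MvPolynomial (Fin 3) k ⧸ I) (MvPolynomial (Fin 3) k ⧸ I),
      δ (Ideal.Quotient.mk I (X 0))
          = Ideal.Quotient.mk I (C i * (γ : MvPolynomial (Fin 3) k) * X 2 ^ (γ - 1)) ∧
      δ (Ideal.Quotient.mk I (X 1))
          = Ideal.Quotient.mk I ((γ : MvPolynomial (Fin 3) k) * X 2 ^ (γ - 1)) ∧
      δ (Ideal.Quotient.mk I (X 2))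
          = Ideal.Quotient.mk I (-(2 : MvPolynomial (Fin 3) k) * (C i * X 0 + X 1)) ∧
      IsLND δ :=
  stmt10_general i hi γ I hI
end

section
/- Let R = k[T₁₁,…,T₁n₁,…,T_{r1},…,T_{rn_r}]/I be the algebra over an algebraically closed field k of characteristic zero defined by the relations T_i^{l_i} − T_{i+1}^{l_{i+1}} − (a_{i+1} − a_i) = 0 for i = 1,…,r−1, where T_i^{l_i} = ∏_j T_{ij}^{l_{ij}} with all l_{ij} ≥ 1 and a₁,…,a_r ∈ k pairwise distinct. Suppose there is a tuple C = (c₁,…,c_r) with l_{i c_i} = 1 for all i except possibly one index i₀. Then the assignment δ_C(T_{i c_i}) = ∏_{k ≠ i} ∂T_k^{l_k}/∂T_{k c_k}, δ_C(T_{ij}) = 0 for j ≠ c_i, extends to a well-defined locally nilpotent derivation of R. -/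
/-!
Call the variables `T_{ij}` with `j ≠ c_i` passive: `δ_C` kills them. For `m ≠ i₀` we have
`l_{m c_m} = 1`, so `∂T_m^{l_m}/∂T_{m c_m}` is a monomial in passive variables; hence
`δ_C T_{i₀ c_{i₀}}` is killed by `δ_C`. Then every factor `∂T_m^{l_m}/∂T_{m c_m}`, and so every
`δ_C T_{i c_i}`, lies in the subalgebra of elements on which `δ_C` acts nilpotently, which
therefore contains all variables. As for well-definedness, `δ_C` takes the same value
`∏_m ∂T_m^{l_m}/∂T_{m c_m}` on every `T_i^{l_i}`, so it kills each relation.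
-/

open MvPolynomial

namespace Derivation

variable {R A : Type*} [CommSemiring R] [CommSemiring A] [Algebra R A] (D : Derivation R A A)

theorem pow_succ_apply (m : ℕ) (x : A) :
    (D.toLinearMap ^ (m + 1)) x = (D.toLinearMap ^ m) (D x) := by
  rw [pow_succ, Module.End.mul_apply]
  rfl

theorem pow_apply_mul_eq_zero {x y : A} {a b : ℕ} (hx : (D.toLinearMap ^ a) x = 0)
    (hy : (D.toLinearMap ^ b) y = 0) : (D.toLinearMap ^ (a + b)) (x * y) = 0 := by
  induction a generalizing x b y with
  | zero =>
    rw [pow_zero, Module.End.one_apply] at hx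
    rw [hx, zero_mul, map_zero]
  | succ a iha =>
    induction b generalizing y with
    | zero =>
      rw [pow_zero, Module.End.one_apply] at hy
      rw [hy, mul_zero, map_zero]
    | succ b ihb =>
      rw [D.pow_succ_apply] at hx
      have hxDy : (D.toLinearMap ^ (a + 1 + b)) (x * D y) = 0 :=
        ihb (by rwa [D.pow_succ_apply] at hy)
      have hDxy : (D.toLinearMap ^ (a + (b + 1))) (D x * y) = 0 := iha hx hy
      rw [show a + 1 + (b + 1) = a + 1 + b + 1 by omega, D.pow_succ_apply, D.leibniz,
        smul_eq_mul, smul_eq_mul, map_add, hxDy, mul_comm y,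
        show a + 1 + b = a + (b + 1) by omega, hDxy, add_zero]

theorem pow_apply_eq_zero_of_le {x : A} {m N : ℕ} (hm : (D.toLinearMap ^ m) x = 0)
    (hN : m ≤ N) : (D.toLinearMap ^ N) x = 0 := by
  rw [← Nat.sub_add_cancel hN, pow_add, Module.End.mul_apply, hm, map_zero]

def locallyNilpotentSubalgebra : Subalgebra R A where
  carrier := {x | ∃ m, (D.toLinearMap ^ m) x = 0}
  mul_mem' := fun ⟨a, hx⟩ ⟨b, hy⟩ => ⟨a + b, D.pow_apply_mul_eq_zero hx hy⟩
  add_mem' := fun {x y} ⟨a, hx⟩ ⟨b, hy⟩ => ⟨max a b, by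
    rw [map_add, D.pow_apply_eq_zero_of_le hx (le_max_left a b),
      D.pow_apply_eq_zero_of_le hy (le_max_right a b), add_zero]⟩
  algebraMap_mem' r := ⟨1, by rw [pow_one]; exact D.map_algebraMap r⟩

theorem mem_locallyNilpotentSubalgebra_of_map_mem {x : A}
    (h : D x ∈ D.locallyNilpotentSubalgebra) : x ∈ D.locallyNilpotentSubalgebra := by
  obtain ⟨m, hm⟩ := h
  exact ⟨m + 1, by rwa [D.pow_succ_apply]⟩

theorem mem_locallyNilpotentSubalgebra_of_map_eq_zero {x : A} (h : D x = 0) :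
    x ∈ D.locallyNilpotentSubalgebra :=
  D.mem_locallyNilpotentSubalgebra_of_map_mem (h ▸ Subalgebra.zero_mem _)

end Derivation

theorem MvPolynomial.isLND_of_forall_X_mem {R σ : Type*} [CommRing R]
    {D : Derivation R (MvPolynomial σ R) (MvPolynomial σ R)}
    (h : ∀ v, X v ∈ D.locallyNilpotentSubalgebra) : IsLND D := by
  intro g
  have hg : g ∈ Algebra.adjoin R (Set.range (X : σ → MvPolynomial σ R)) := by
    rw [adjoin_range_X]; trivial
  exact Algebra.adjoin_le (Set.range_subset_iff.2 h) hg

section Quotient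

variable {R A : Type*} [CommRing R] [CommRing A] [Algebra R A]

theorem Derivation.mapsTo_ideal_span {D : Derivation R A A} {s : Set A}
    (h : ∀ x ∈ s, D x ∈ Ideal.span s) : Set.MapsTo D (Ideal.span s) (Ideal.span s) := by
  intro x hx
  induction hx using Submodule.span_induction with
  | mem x hx => exact h x hx
  | zero => rw [map_zero]; exact Ideal.zero_mem _
  | add x y _ _ hx hy => rw [map_add]; exact Ideal.add_mem _ hx hy
  | smul f x hxmem hx =>
    rw [smul_eq_mul, D.leibniz, smul_eq_mul, smul_eq_mul]
    exact Ideal.add_mem _ (Ideal.mul_mem_left _ _ hx) (Ideal.mul_mem_right _ _ hxmem)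

theorem Derivation.exists_quotient_isLND {D : Derivation R A A} (hD : IsLND D) {I : Ideal A}
    (hI : Set.MapsTo D I I) :
    ∃ δ : Derivation R (A ⧸ I) (A ⧸ I),
      (∀ p, δ (Ideal.Quotient.mk I p) = Ideal.Quotient.mk I (D p)) ∧ IsLND δ := by
  have hker : ∀ x, Ideal.Quotient.mkₐ R I x = 0 → Ideal.Quotient.mkₐ R I (D x) = 0 := by
    intro x hx
    rw [Ideal.Quotient.mkₐ_eq_mk, Ideal.Quotient.eq_zero_iff_mem] at hx ⊢
    exact hI hx
  set δ := Derivation.liftOfSurjective (Ideal.Quotient.mkₐ_surjective R I) hker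
  have hδ : ∀ p, δ (Ideal.Quotient.mk I p) = Ideal.Quotient.mk I (D p) :=
    Derivation.liftOfSurjective_apply (Ideal.Quotient.mkₐ_surjective R I) hker
  have hpow : ∀ m p, (δ.toLinearMap ^ m) (Ideal.Quotient.mk I p) =
      Ideal.Quotient.mk I ((D.toLinearMap ^ m) p) := by
    intro m
    induction m with
    | zero => intro p; rfl
    | succ m ih => intro p; rw [δ.pow_succ_apply, D.pow_succ_apply, hδ, ih]
  refine ⟨δ, hδ, fun g => ?_⟩
  obtain ⟨p, rfl⟩ := Ideal.Quotient.mk_surjective g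
  obtain ⟨m, hm⟩ := hD p
  exact ⟨m, by rw [hpow, hm, map_zero]⟩

end Quotient

namespace MvPolynomial

variable {R σ : Type*} [CommSemiring R]

theorem X_mem_supported_of_mem {s : Set σ} {i : σ} (h : i ∈ s) : X i ∈ supported R s :=
  Algebra.subset_adjoin (Set.mem_image_of_mem X h)

theorem derivation_eq_zero_of_mem_supported {D : Derivation R (MvPolynomial σ R) (MvPolynomial σ R)}
    {s : Set σ} (hD : ∀ w ∈ s, D (X w) = 0) {p : MvPolynomial σ R} (hp : p ∈ supported R s) :
    D p = 0 :=
  derivation_eqOn_supported (D₂ := 0) hD hp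

theorem derivation_eq_pderiv_mul {D : Derivation R (MvPolynomial σ R) (MvPolynomial σ R)}
    {s : Set σ} {v : σ} (hD : ∀ w ∈ s, w ≠ v → D (X w) = 0) {p : MvPolynomial σ R}
    (hp : p ∈ supported R s) : D p = pderiv v p * D (X v) := by
  classical
  rw [mul_comm, ← smul_eq_mul, ← Derivation.smul_apply]
  refine derivation_eqOn_supported (fun w hw => ?_) hp
  simp only [Function.comp_apply, Derivation.smul_apply, smul_eq_mul, pderiv_X]
  by_cases hwv : w = v
  · subst hwv; simp
  · simp [hwv, hD w hw hwv]

end MvPolynomial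

section Trinomial

variable (R : Type*) [CommSemiring R] {ι : Type*} {κ : ι → Type*} [∀ i, Fintype (κ i)]
  (l : ∀ i, κ i → ℕ)

/-- The monomial `T_i^{l_i} = ∏_j T_{ij}^{l_{ij}}`. -/
noncomputable def blockMonomial (i : ι) : MvPolynomial (Σ i, κ i) R :=
  ∏ j, X ⟨i, j⟩ ^ l i j

variable {R l}

theorem blockMonomial_mem_supported (i : ι) :
    blockMonomial R l i ∈ supported R {w : Σ i, κ i | w.1 = i} := by
  refine Subalgebra.prod_mem _ fun j _ => Subalgebra.pow_mem _ ?_ _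
  exact X_mem_supported_of_mem (show (⟨i, j⟩ : Σ i, κ i).1 = i from rfl)

variable (R l) [∀ i, DecidableEq (κ i)] (c : ∀ i, κ i)

noncomputable def blockCofactor (i : ι) : MvPolynomial (Σ i, κ i) R :=
  ∏ j ∈ Finset.univ.erase (c i), X ⟨i, j⟩ ^ l i j

variable {R l c}

theorem blockMonomial_eq_X_pow_mul (i : ι) :
    blockMonomial R l i = X ⟨i, c i⟩ ^ l i (c i) * blockCofactor R l c i :=
  (Finset.mul_prod_erase _ _ (Finset.mem_univ _)).symm

theorem blockCofactor_mem_supported (i : ι) :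
    blockCofactor R l c i ∈ supported R {w : Σ i, κ i | w.2 ≠ c w.1} :=
  Subalgebra.prod_mem _ fun _ hj =>
    Subalgebra.pow_mem _ (X_mem_supported_of_mem (Finset.ne_of_mem_erase hj)) _

theorem pderiv_blockMonomial (i : ι) :
    pderiv ⟨i, c i⟩ (blockMonomial R l i) =
      l i (c i) • X ⟨i, c i⟩ ^ (l i (c i) - 1) * blockCofactor R l c i := by
  have hcofactor : pderiv ⟨i, c i⟩ (blockCofactor R l c i) = 0 := by
    refine derivation_eq_zero_of_mem_supported (fun w hw => pderiv_X_of_ne ?_)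
      (blockCofactor_mem_supported i)
    rintro rfl
    exact hw rfl
  rw [blockMonomial_eq_X_pow_mul, Derivation.leibniz, hcofactor, Derivation.leibniz_pow,
    pderiv_X_self, smul_zero, zero_add]
  simp only [smul_eq_mul, nsmul_eq_mul, mul_one]
  ring

variable (R l c) [Fintype ι] [DecidableEq ι]

/-- The derivation `δ_C` of the paper, with `C = c`. -/
noncomputable def trinomialDerivation :
    Derivation R (MvPolynomial (Σ i, κ i) R) (MvPolynomial (Σ i, κ i) R) :=
  mkDerivation R fun v => if v.2 = c v.1 then
    ∏ m ∈ Finset.univ.erase v.1, pderiv ⟨m, c m⟩ (blockMonomial R l m) else 0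

variable {R l c}

theorem trinomialDerivation_X_of_ne {v : Σ i, κ i} (hv : v.2 ≠ c v.1) :
    trinomialDerivation R l c (X v) = 0 := by
  rw [trinomialDerivation, mkDerivation_X, if_neg hv]

theorem trinomialDerivation_X_self (i : ι) :
    trinomialDerivation R l c (X ⟨i, c i⟩) =
      ∏ m ∈ Finset.univ.erase i, pderiv ⟨m, c m⟩ (blockMonomial R l m) := by
  rw [trinomialDerivation, mkDerivation_X, if_pos rfl]

theorem trinomialDerivation_blockMonomial (i : ι) :
    trinomialDerivation R l c (blockMonomial R l i) =
      ∏ m, pderiv ⟨m, c m⟩ (blockMonomial R l m) := by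
  have hpassive : ∀ w ∈ {w : Σ i, κ i | w.1 = i}, w ≠ ⟨i, c i⟩ →
      trinomialDerivation R l c (X w) = 0 := by
    rintro ⟨i', j⟩ hi' hne
    obtain rfl : i' = i := hi'
    refine trinomialDerivation_X_of_ne fun (hj : j = c i') => hne ?_
    subst hj
    rfl
  rw [derivation_eq_pderiv_mul hpassive (blockMonomial_mem_supported i),
    trinomialDerivation_X_self]
  exact Finset.mul_prod_erase _
    (fun m : ι => pderiv (⟨m, c m⟩ : Σ i, κ i) (blockMonomial R l m)) (Finset.mem_univ i)

theorem X_mem_locallyNilpotentSubalgebra_trinomialDerivation {i₀ : ι}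
    (hC : ∀ i, i ≠ i₀ → l i (c i) = 1) (v : Σ i, κ i) :
    X v ∈ (trinomialDerivation R l c).locallyNilpotentSubalgebra := by
  set S := (trinomialDerivation R l c).locallyNilpotentSubalgebra
  have hpassive : ∀ w : Σ i, κ i, w.2 ≠ c w.1 → X w ∈ S := fun w hw =>
    Derivation.mem_locallyNilpotentSubalgebra_of_map_eq_zero _ (trinomialDerivation_X_of_ne hw)
  have hpderiv : ∀ m, X ⟨m, c m⟩ ^ (l m (c m) - 1) ∈ S →
      pderiv ⟨m, c m⟩ (blockMonomial R l m) ∈ S := by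
    intro m hm
    have hcofactor : blockCofactor R l c m ∈ S :=
      Algebra.adjoin_le (Set.image_subset_iff.2 hpassive) (blockCofactor_mem_supported m)
    rw [pderiv_blockMonomial]
    exact Subalgebra.mul_mem _ (Subalgebra.nsmul_mem _ hm _) hcofactor
  have hpderiv_of_ne : ∀ m, m ≠ i₀ → pderiv ⟨m, c m⟩ (blockMonomial R l m) ∈ S := by
    intro m hm
    refine hpderiv m ?_
    rw [hC m hm, Nat.sub_self, pow_zero]
    exact Subalgebra.one_mem _
  have hX₀ : X ⟨i₀, c i₀⟩ ∈ S := by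
    refine Derivation.mem_locallyNilpotentSubalgebra_of_map_mem _ ?_
    rw [trinomialDerivation_X_self]
    exact Subalgebra.prod_mem _ fun m hm => hpderiv_of_ne m (Finset.ne_of_mem_erase hm)
  have hpderiv_all : ∀ m, pderiv ⟨m, c m⟩ (blockMonomial R l m) ∈ S := by
    intro m
    rcases eq_or_ne m i₀ with rfl | hm
    · exact hpderiv m (Subalgebra.pow_mem _ hX₀ _)
    · exact hpderiv_of_ne m hm
  obtain ⟨i, j⟩ := v
  by_cases hj : j = c i
  · subst hj
    refine Derivation.mem_locallyNilpotentSubalgebra_of_map_mem _ ?_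
    rw [trinomialDerivation_X_self]
    exact Subalgebra.prod_mem _ fun m _ => hpderiv_all m
  · exact hpassive ⟨i, j⟩ hj

end Trinomial

theorem stmt15_general {k : Type*} [Field k]
    (r : ℕ) (n : Fin r → ℕ)
    (l : (i : Fin r) → Fin (n i) → ℕ)
    (a : Fin r → k)
    (c : (i : Fin r) → Fin (n i)) (i₀ : Fin r) (hC : ∀ i, i ≠ i₀ → l i (c i) = 1)
    (T : Fin r → MvPolynomial (Σ i : Fin r, Fin (n i)) k)
    (hT : ∀ i, T i = ∏ j : Fin (n i), X (⟨i, j⟩ : Σ i : Fin r, Fin (n i)) ^ l i j)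
    (I : Ideal (MvPolynomial (Σ i : Fin r, Fin (n i)) k))
    (hI : I = Ideal.span {p | ∃ (i : ℕ) (h : i + 1 < r),
      p = T ⟨i, Nat.lt_of_succ_lt h⟩ - T ⟨i + 1, h⟩
          - C (a ⟨i + 1, h⟩ - a ⟨i, Nat.lt_of_succ_lt h⟩)})
    (D : Derivation k (MvPolynomial (Σ i : Fin r, Fin (n i)) k)
        (MvPolynomial (Σ i : Fin r, Fin (n i)) k))
    (hD : D = mkDerivation k (fun v : Σ i : Fin r, Fin (n i) =>
      if v.2 = c v.1 then
        Finset.prod (Finset.univ.erase v.1)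
          (fun m => pderiv (⟨m, c m⟩ : Σ i : Fin r, Fin (n i)) (T m))
      else 0)) :
    ∃ δ : Derivation k (MvPolynomial (Σ i : Fin r, Fin (n i)) k ⧸ I)
        (MvPolynomial (Σ i : Fin r, Fin (n i)) k ⧸ I),
      (∀ p : MvPolynomial (Σ i : Fin r, Fin (n i)) k,
        δ (Ideal.Quotient.mk I p) = Ideal.Quotient.mk I (D p)) ∧
      IsLND δ := by
  obtain rfl : T = blockMonomial k l := funext hT
  obtain rfl : D = trinomialDerivation k l c := hD
  subst hI
  refine Derivation.exists_quotient_isLND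
    (isLND_of_forall_X_mem (X_mem_locallyNilpotentSubalgebra_trinomialDerivation hC))
    (Derivation.mapsTo_ideal_span ?_)
  rintro _ ⟨i, h, rfl⟩
  rw [map_sub, map_sub, trinomialDerivation_blockMonomial, trinomialDerivation_blockMonomial,
    derivation_C, sub_self, sub_zero]
  exact Ideal.zero_mem _

/-- Let `R = k[T_{ij}]/I` be a trinomial algebra of Type 1, defined by the relations
`T_i^{l_i} - T_{i+1}^{l_{i+1}} - (a_{i+1} - a_i) = 0`, with pairwise distinct `a_i` and
all exponents `l_{ij} ≥ 1`.  If `C = (c_1,…,c_r)` is a tuple with `l_{i c_i} = 1` for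
all `i` except possibly one index `i₀`, then the assignment
`δ_C(T_{i c_i}) = ∏_{m ≠ i} ∂T_m^{l_m}/∂T_{m c_m}`, `δ_C(T_{ij}) = 0` for `j ≠ c_i`,
descends to a well-defined locally nilpotent derivation of `R`. -/
theorem stmt15 {k : Type*} [Field k] [IsAlgClosed k] [CharZero k]
    (r : ℕ) (hr : 2 ≤ r) (n : Fin r → ℕ) (hn : ∀ i, 1 ≤ n i)
    (l : (i : Fin r) → Fin (n i) → ℕ) (hl : ∀ i j, 1 ≤ l i j)
    (a : Fin r → k) (ha : Function.Injective a)
    (c : (i : Fin r) → Fin (n i)) (i₀ : Fin r) (hC : ∀ i, i ≠ i₀ → l i (c i) = 1)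
    (T : Fin r → MvPolynomial (Σ i : Fin r, Fin (n i)) k)
    (hT : ∀ i, T i = ∏ j : Fin (n i), X (⟨i, j⟩ : Σ i : Fin r, Fin (n i)) ^ l i j)
    (I : Ideal (MvPolynomial (Σ i : Fin r, Fin (n i)) k))
    (hI : I = Ideal.span {p | ∃ (i : ℕ) (h : i + 1 < r),
      p = T ⟨i, Nat.lt_of_succ_lt h⟩ - T ⟨i + 1, h⟩
          - C (a ⟨i + 1, h⟩ - a ⟨i, Nat.lt_of_succ_lt h⟩)})
    (D : Derivation k (MvPolynomial (Σ i : Fin r, Fin (n i)) k)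
        (MvPolynomial (Σ i : Fin r, Fin (n i)) k))
    (hD : D = mkDerivation k (fun v : Σ i : Fin r, Fin (n i) =>
      if v.2 = c v.1 then
        Finset.prod (Finset.univ.erase v.1)
          (fun m => pderiv (⟨m, c m⟩ : Σ i : Fin r, Fin (n i)) (T m))
      else 0)) :
    ∃ δ : Derivation k (MvPolynomial (Σ i : Fin r, Fin (n i)) k ⧸ I)
        (MvPolynomial (Σ i : Fin r, Fin (n i)) k ⧸ I),
      (∀ p : MvPolynomial (Σ i : Fin r, Fin (n i)) k,
        δ (Ideal.Quotient.mk I p) = Ideal.Quotient.mk I (D p)) ∧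
      IsLND δ :=
  stmt15_general r n l a c i₀ hC T hT I hI D hD
end
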